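/- arXiv:1711.08436 — 2 statements merged into one kernel-verified Lean document; each statement's English description precedes it below -/
import Mathlib

section
/- Constrain-complex lemma: Let K be a finite simplicial complex and M a subcomplex of K. Define Γ(K, M) = {ϑ ∈ M : there exists η ∈ K \ M with ϑ ⊆ η}. If M collapses to a subcomplex M′ and Γ(K, M) ⊆ M′, then K collapses to (K \ M) ∪ M′. -/
open scoped Classical

/-- `K` is an abstract simplicial complex: a collection of finite sets
closed under taking subsets. -/
def IsComplex {V : Type*} (K : Finset (Finset V)) : Prop :=
  ∀ σ ∈ K, ∀ τ ⊆ σ, τ ∈ K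

/-- `σ` is a facet (inclusion-maximal face) of `K`. -/
def IsFacet {V : Type*} (K : Finset (Finset V)) (σ : Finset V) : Prop :=
  σ ∈ K ∧ ∀ τ ∈ K, σ ⊆ τ → σ = τ

/-- `K` is a (nonempty) pure `d`-dimensional complex: it has a face of
dimension `d` and every facet has dimension `d` (cardinality `d+1`). -/
def PureDim {V : Type*} (K : Finset (Finset V)) (d : ℕ) : Prop :=
  (∃ σ ∈ K, σ.card = d + 1) ∧ ∀ σ, IsFacet K σ → σ.card = d + 1

/-- The complex `σᵢ ∩ (⋃_{j<i} σⱼ)`: faces of the `i`-th member of the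
ordering `L` that are contained in some earlier member. -/
noncomputable def shellStep {V : Type*} (L : List (Finset V)) (i : ℕ) (h : i < L.length) :
    Finset (Finset V) :=
  (L.get ⟨i, h⟩).powerset.filter
    (fun τ => ∃ j, ∃ hj : j < L.length, j < i ∧ τ ⊆ L.get ⟨j, hj⟩)

/-- `L` is a shelling of the pure `d`-dimensional complex `K`: an ordering
(without repetition) of all facets of `K` such that each facet meets the union
of the previous ones in a pure `(d-1)`-dimensional complex. -/
def IsShelling {V : Type*} (K : Finset (Finset V)) (d : ℕ) (L : List (Finset V)) : Prop :=
  L.Nodup ∧ (∀ σ, IsFacet K σ ↔ σ ∈ L) ∧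
    ∀ i (h : i < L.length), 1 ≤ i → PureDim (shellStep L i h) (d - 1)

/-- `σ` is a free face of `K`: it is properly contained in a unique
inclusion-maximal face of `K`. -/
def IsFreeFace {V : Type*} (K : Finset (Finset V)) (σ : Finset V) : Prop :=
  σ ∈ K ∧ ∃! τ, IsFacet K τ ∧ σ ⊂ τ

/-- One elementary collapse: delete a free face together with all faces
containing it. -/
def ElemCollapse {V : Type*} (K K' : Finset (Finset V)) : Prop :=
  ∃ σ, IsFreeFace K σ ∧ K' = K.filter (fun η => ¬ σ ⊆ η)

/-- `K` collapses to `L` by a finite sequence of elementary collapses. -/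
def CollapsesTo {V : Type*} : Finset (Finset V) → Finset (Finset V) → Prop :=
  Relation.ReflTransGen ElemCollapse

/-- `K` is collapsible: it collapses to a single vertex. -/
def Collapsible {V : Type*} [DecidableEq V] (K : Finset (Finset V)) : Prop :=
  ∃ v : V, CollapsesTo K {∅, {v}}

/-- The constrain complex `Γ(K, M)`: faces of `M` contained in some face of
`K` outside `M`. -/
noncomputable def constrainC {V : Type*} (K M : Finset (Finset V)) : Finset (Finset V) :=
  M.filter (fun ϑ => ∃ η ∈ K, η ∉ M ∧ ϑ ⊆ η)

lemma collapsesTo_subset {V : Type*} {A B : Finset (Finset V)}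
    (h : CollapsesTo A B) : B ⊆ A := by
  induction h with
  | refl => exact Finset.Subset.refl _
  | tail _ hstep ih =>
    obtain ⟨σ, _, rfl⟩ := hstep
    exact (Finset.filter_subset _ _).trans ih

lemma constrain_step {V : Type*} [DecidableEq V] (K M N N' : Finset (Finset V))
    (hNM : N ⊆ M) (hΓ : constrainC K M ⊆ N') (h : ElemCollapse N N') :
    ElemCollapse ((K \ M) ∪ N) ((K \ M) ∪ N') := by
  obtain ⟨σ, ⟨hσN, τ, ⟨⟨hτN, hτmax⟩, hστ⟩, huniq⟩, hN'⟩ := h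
  have hσN' : σ ∉ N' := by
    rw [hN']
    simp [Finset.mem_filter]
  have hσΓ : σ ∉ constrainC K M := fun hmem => hσN' (hΓ hmem)
  have key : ∀ η ∈ K \ M, ¬ σ ⊆ η := by
    intro η hη hsub
    rw [Finset.mem_sdiff] at hη
    exact hσΓ (by
      simp only [constrainC, Finset.mem_filter]
      exact ⟨hNM hσN, η, hη.1, hη.2, hsub⟩)
  refine ⟨σ, ⟨Finset.mem_union_right _ hσN, τ, ⟨⟨Finset.mem_union_right _ hτN, ?_⟩, hστ⟩, ?_⟩, ?_⟩
  · intro ρ hρ hsub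
    rcases Finset.mem_union.mp hρ with hρ | hρ
    · exact absurd (hστ.subset.trans hsub) (key ρ hρ)
    · exact hτmax ρ hρ hsub
  · rintro ρ ⟨⟨hρmem, hρmax⟩, hσρ⟩
    have hρN : ρ ∈ N := by
      rcases Finset.mem_union.mp hρmem with hρ | hρ
      · exact absurd hσρ.subset (key ρ hρ)
      · exact hρ
    exact huniq ρ ⟨⟨hρN, fun t ht hs => hρmax t (Finset.mem_union_right _ ht) hs⟩, hσρ⟩
  · rw [hN']
    ext x
    simp only [Finset.mem_filter, Finset.mem_union]
    constructor
    · rintro (hx | ⟨hx, hns⟩)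
      · exact ⟨Or.inl hx, key x hx⟩
      · exact ⟨Or.inr hx, hns⟩
    · rintro ⟨hx | hx, hns⟩
      · exact Or.inl hx
      · exact Or.inr ⟨hx, hns⟩

/-- constrain-complex lemma: if the subcomplex `M` of `K`
collapses to `M′` and `Γ(K, M) ⊆ M′`, then `K` collapses to `(K \ M) ∪ M′`. -/
theorem constrain_lemma {V : Type*} [DecidableEq V] (K M M' : Finset (Finset V))
    (hK : IsComplex K) (hM : IsComplex M) (hMK : M ⊆ K) (hM'M : M' ⊆ M)
    (hcol : CollapsesTo M M') (hΓ : constrainC K M ⊆ M') :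
    CollapsesTo K ((K \ M) ∪ M') := by
  have main : ∀ N, CollapsesTo N M' →
      (N ⊆ M → CollapsesTo ((K \ M) ∪ N) ((K \ M) ∪ M')) := by
    intro N h
    refine Relation.ReflTransGen.head_induction_on h (fun _ => .refl) ?_
    intro a c hac hcb ih ha
    have hca : c ⊆ a := collapsesTo_subset (Relation.ReflTransGen.single hac)
    have hΓc : constrainC K M ⊆ c := hΓ.trans (collapsesTo_subset hcb)
    exact (ih (hca.trans ha)).head (constrain_step K M a c ha hΓc hac)
  have := main M hcol (Finset.Subset.refl _)
  rwa [Finset.sdiff_union_of_subset hMK] at this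
end

section
/- No triangulation of the torus is shellable: in any ordering of the facets of a simplicial complex triangulating the 2-torus, some facet σᵢ (i ≥ 2) satisfies that σᵢ ∩ (⋃_{j<i} σⱼ) is not pure 1-dimensional. -/
open scoped Classical

/-- Reduced Euler characteristic: `∑_{i≥-1} (-1)^i f_i(K)`, where a face of
cardinality `c` has dimension `i = c - 1` (the empty face counts with sign `+1`
exactly when `K` is nonempty, since any nonempty complex contains `∅`). -/
def redEuler {V : Type*} (K : Finset (Finset V)) : ℤ :=
  ∑ σ ∈ K, (-1 : ℤ) ^ (σ.card + 1)

/-! Reduced Euler characteristic is additive: `χ̃(A ∪ B) + χ̃(A ∩ B) = χ̃ A + χ̃ B`. The `i`-th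
step of a shelling of a pure `d`-complex glues the full simplex on a facet `σ` (which has
`χ̃ = 0`) along a pure `(d-1)`-subcomplex of `∂σ`. Such a subcomplex consists of the faces of `σ`
not containing a fixed vertex set `T`, so its `χ̃` is `0` unless `T = σ`, when it is
`(-1)^(d-1)`. Hence `(-1)^d χ̃` never decreases along a shelling, and a shellable pure
`2`-complex has `χ̃ ≥ 0`, whereas the torus has `χ̃ = -1`. -/

open Finset

section

variable {V : Type*}

lemma redEuler_union_add_redEuler_inter (A B : Finset (Finset V)) :
    redEuler (A ∪ B) + redEuler (A ∩ B) = redEuler A + redEuler B :=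
  sum_union_inter

lemma redEuler_powerset {σ : Finset V} (hσ : σ.Nonempty) : redEuler σ.powerset = 0 := by
  simp only [redEuler, pow_succ, ← sum_mul,
    sum_powerset_neg_one_pow_card_of_nonempty hσ, zero_mul]

lemma sum_Icc_neg_one_pow_card {T σ : Finset V} (hTσ : T ⊆ σ) :
    ∑ τ ∈ Icc T σ, (-1 : ℤ) ^ τ.card = if T = σ then (-1) ^ σ.card else 0 := by
  have hdisj : ∀ U ∈ (σ \ T).powerset, Disjoint T U := fun U hU =>
    disjoint_of_subset_right (mem_powerset.1 hU) disjoint_sdiff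
  rw [Icc_eq_image_powerset hTσ, sum_image fun U hU W hW hUW => by
      rw [← union_sdiff_cancel_left (hdisj U hU), hUW,
        union_sdiff_cancel_left (hdisj W hW)],
    sum_congr rfl fun U hU => by
      rw [card_union_of_disjoint (hdisj U hU), pow_add],
    ← mul_sum, sum_powerset_neg_one_pow_card]
  by_cases h : T = σ
  · simp [h]
  · simpa [h, sdiff_eq_empty_iff_subset] using
      fun hσT => h (Subset.antisymm hTσ hσT)

lemma redEuler_filter_not_superset {T σ : Finset V} (hTσ : T ⊆ σ) (hσ : σ.Nonempty) :
    redEuler (σ.powerset.filter (fun τ => ¬ T ⊆ τ)) =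
      if T = σ then (-1) ^ σ.card else 0 := by
  have hsplit := sum_filter_add_sum_filter_not σ.powerset (fun τ => T ⊆ τ)
    (fun τ => (-1 : ℤ) ^ (τ.card + 1))
  have hIcc : ∑ τ ∈ Icc T σ, (-1 : ℤ) ^ (τ.card + 1) =
      -if T = σ then (-1) ^ σ.card else 0 := by
    simp only [pow_succ, mul_neg_one, sum_neg_distrib, sum_Icc_neg_one_pow_card hTσ]
  rw [← Icc_eq_filter_powerset, hIcc] at hsplit
  change _ + redEuler _ = redEuler _ at hsplit
  linarith [redEuler_powerset hσ]

lemma exists_isFacet_superset {K : Finset (Finset V)} {τ : Finset V} (hτ : τ ∈ K) :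
    ∃ σ, IsFacet K σ ∧ τ ⊆ σ := by
  obtain ⟨σ, hτσ, hσ⟩ := K.exists_le_maximal hτ
  exact ⟨σ, ⟨hσ.prop, fun ρ hρ hσρ => hσ.eq_of_le hρ hσρ⟩, hτσ⟩

lemma exists_eq_filter_not_superset {S : Finset (Finset V)} {σ : Finset V} {e : ℕ}
    (hσ : σ.card = e + 2) (hSσ : S ⊆ σ.powerset) (hS : IsComplex S)
    (hfacet : ∀ ρ, IsFacet S ρ → ρ.card = e + 1) :
    ∃ T ⊆ σ, S = σ.powerset.filter (fun τ => ¬ T ⊆ τ) := by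
  refine ⟨σ.filter (fun v => σ.erase v ∈ S), filter_subset _ _, ?_⟩
  ext τ
  simp only [mem_filter, mem_powerset, not_subset]
  constructor
  · intro hτ
    obtain ⟨ρ, hρ, hτρ⟩ := exists_isFacet_superset hτ
    have hρσ : ρ ⊆ σ := mem_powerset.1 (hSσ hρ.1)
    obtain ⟨v, hvρ, rfl⟩ : ∃ v ∉ ρ, insert v ρ = σ :=
      exists_eq_insert_iff.2 ⟨hρσ, by rw [hfacet ρ hρ, hσ]⟩
    refine ⟨hτρ.trans hρσ, v, ⟨mem_insert_self v ρ, ?_⟩, fun hvτ => hvρ (hτρ hvτ)⟩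
    rw [erase_insert hvρ]
    exact hρ.1
  · rintro ⟨hτσ, v, ⟨-, hv⟩, hvτ⟩
    exact hS _ hv τ fun x hx => mem_erase.2 ⟨fun h => hvτ (h ▸ hx), hτσ hx⟩

lemma sign_mul_redEuler_nonneg_of_facets_card {S : Finset (Finset V)} {σ : Finset V} {e : ℕ}
    (hσ : σ.card = e + 2) (hSσ : S ⊆ σ.powerset) (hS : IsComplex S)
    (hfacet : ∀ ρ, IsFacet S ρ → ρ.card = e + 1) :
    0 ≤ (-1) ^ e * redEuler S := by
  obtain ⟨T, hTσ, rfl⟩ := exists_eq_filter_not_superset hσ hSσ hS hfacet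
  rw [redEuler_filter_not_superset hTσ (card_pos.1 (by omega))]
  split_ifs
  · rw [hσ, ← pow_add, Even.neg_one_pow ⟨e + 1, by ring⟩]
    exact zero_le_one
  · rw [mul_zero]

lemma isComplex_powerset (σ : Finset V) : IsComplex σ.powerset := fun _ hτ _ hρτ =>
  mem_powerset.2 (hρτ.trans (mem_powerset.1 hτ))

lemma IsComplex.inter {A B : Finset (Finset V)} (hA : IsComplex A) (hB : IsComplex B) :
    IsComplex (A ∩ B) := fun τ hτ ρ hρτ => by
  rw [mem_inter] at hτ ⊢
  exact ⟨hA τ hτ.1 ρ hρτ, hB τ hτ.2 ρ hρτ⟩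

noncomputable def generatedComplex (L : List (Finset V)) : Finset (Finset V) :=
  L.toFinset.biUnion powerset

lemma mem_generatedComplex {L : List (Finset V)} {τ : Finset V} :
    τ ∈ generatedComplex L ↔ ∃ σ ∈ L, τ ⊆ σ := by
  simp [generatedComplex]

lemma isComplex_generatedComplex (L : List (Finset V)) : IsComplex (generatedComplex L) :=
  fun _ hτ ρ hρτ => by
    obtain ⟨σ, hσ, hτσ⟩ := mem_generatedComplex.1 hτ
    exact mem_generatedComplex.2 ⟨σ, hσ, hρτ.trans hτσ⟩

lemma generatedComplex_take_add_one {L : List (Finset V)} {i : ℕ} (h : i < L.length) :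
    generatedComplex (L.take (i + 1)) = generatedComplex (L.take i) ∪ L[i].powerset := by
  ext τ
  rw [mem_union, mem_generatedComplex, mem_generatedComplex, mem_powerset,
    List.take_add_one, List.getElem?_eq_getElem h]
  simp only [Option.toList_some, List.mem_append, List.mem_singleton, or_and_right, exists_or,
    exists_eq_left]

lemma shellStep_eq_inter {L : List (Finset V)} {i : ℕ} (h : i < L.length) :
    shellStep L i h = generatedComplex (L.take i) ∩ L[i].powerset := by
  ext τ
  simp only [shellStep, mem_filter, mem_inter, mem_generatedComplex,
    List.mem_take_iff_getElem, List.get_eq_getElem]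
  constructor
  · rintro ⟨hτ, j, hj, hji, hτj⟩
    exact ⟨⟨_, ⟨j, lt_min hji hj, rfl⟩, hτj⟩, hτ⟩
  · rintro ⟨⟨_, ⟨j, hj, rfl⟩, hτj⟩, hτ⟩
    exact ⟨hτ, j, (lt_min_iff.1 hj).2, (lt_min_iff.1 hj).1, hτj⟩

lemma IsShelling.generatedComplex_eq {K : Finset (Finset V)} {d : ℕ} {L : List (Finset V)}
    (hK : IsComplex K) (hL : IsShelling K d L) : generatedComplex L = K := by
  ext τ
  rw [mem_generatedComplex]
  constructor
  · rintro ⟨σ, hσ, hτσ⟩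
    exact hK σ ((hL.2.1 σ).2 hσ).1 τ hτσ
  · intro hτ
    obtain ⟨σ, hσ, hτσ⟩ := exists_isFacet_superset hτ
    exact ⟨σ, (hL.2.1 σ).1 hσ, hτσ⟩

lemma sign_mul_redEuler_generatedComplex_take_nonneg {L : List (Finset V)} {e : ℕ}
    (hcard : ∀ σ ∈ L, σ.card = e + 2)
    (hstep : ∀ i (h : i < L.length), 1 ≤ i → PureDim (shellStep L i h) e) :
    ∀ i ≤ L.length, 0 ≤ (-1) ^ (e + 1) * redEuler (generatedComplex (L.take i))
  | 0, _ => by simp [generatedComplex, redEuler]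
  | i + 1, hi => by
    have h : i < L.length := hi
    have hσ : L[i].card = e + 2 := hcard L[i] (List.getElem_mem h)
    have hunion := redEuler_union_add_redEuler_inter (generatedComplex (L.take i)) L[i].powerset
    rw [← generatedComplex_take_add_one h, ← shellStep_eq_inter h,
      redEuler_powerset (card_pos.1 (by omega))] at hunion
    have hfacet : ∀ ρ, IsFacet (shellStep L i h) ρ → ρ.card = e + 1 := by
      intro ρ hρ
      rcases Nat.eq_zero_or_pos i with rfl | hi0
      · simp [shellStep_eq_inter, generatedComplex, IsFacet] at hρ
      · exact (hstep i h hi0).2 ρ hρ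
    have hstep_nonneg : 0 ≤ (-1) ^ e * redEuler (shellStep L i h) := by
      rw [shellStep_eq_inter h] at hfacet ⊢
      exact sign_mul_redEuler_nonneg_of_facets_card hσ inter_subset_right
        ((isComplex_generatedComplex _).inter (isComplex_powerset _)) hfacet
    have ih := sign_mul_redEuler_generatedComplex_take_nonneg hcard hstep i h.le
    rw [pow_succ] at ih ⊢
    linear_combination ih + hstep_nonneg + (-1) ^ e * hunion

theorem IsShelling.sign_mul_redEuler_nonneg {K : Finset (Finset V)} {e : ℕ} {L : List (Finset V)}
    (hK : IsComplex K) (hfacet : ∀ σ, IsFacet K σ → σ.card = e + 2)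
    (hL : IsShelling K (e + 1) L) : 0 ≤ (-1) ^ (e + 1) * redEuler K := by
  rw [← hL.generatedComplex_eq hK, ← L.take_length]
  exact sign_mul_redEuler_generatedComplex_take_nonneg (fun σ hσ => hfacet σ ((hL.2.1 σ).2 hσ))
    hL.2.2 _ le_rfl

end

theorem torus_not_shellable_general {V : Type*} (K : Finset (Finset V))
    (hK : IsComplex K) (hpure : PureDim K 2)
    (hχ : redEuler K = -1) :
    ∀ L : List (Finset V), ¬ IsShelling K 2 L := fun _ hL =>
  absurd (hL.sign_mul_redEuler_nonneg hK hpure.2) (by norm_num [hχ])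

/-- no triangulation of the torus is shellable.  Here a
triangulation of the 2-torus is characterized combinatorially as a pure
2-dimensional complex in which every edge lies in exactly two triangles and
whose reduced Euler characteristic is `−1` (i.e. `χ = 0`). -/
theorem torus_not_shellable {V : Type*} [DecidableEq V] (K : Finset (Finset V))
    (hK : IsComplex K) (hpure : PureDim K 2)
    (hedge : ∀ e ∈ K, e.card = 2 → (K.filter (fun t => t.card = 3 ∧ e ⊆ t)).card = 2)
    (hχ : redEuler K = -1) :
    ∀ L : List (Finset V), ¬ IsShelling K 2 L :=
  torus_not_shellable_general K hK hpure hχ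
end
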